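/- arXiv:2005.04773 — 2 statements merged into one kernel-verified Lean document; each statement's English description precedes it below -/
import Mathlib

section
/- For any real number x with 0 ≤ x ≤ 1 - 1/d (where d ≥ 2 is a natural number) and any natural number n, the number of strings i in {0,1,...,d-1}^n whose relative Hamming weight (fraction of nonzero coordinates) is at most x is at most d^(n·h_d(x)), where h_d(x) = x·log_d(d-1) - x·log_d(x) - (1-x)·log_d(1-x) is the d-ary entropy function (with the convention 0·log 0 = 0). -/
open scoped Classical

/-- d-ary entropy function (convention `0 * log 0 = 0` is automatic since `Real.log 0 = 0`). -/
noncomputable def hEnt (d : ℕ) (x : ℝ) : ℝ :=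
  x * Real.logb d (d - 1) - x * Real.logb d x - (1 - x) * Real.logb d (1 - x)

/-- relative Hamming weight of a string over the alphabet `{0, ..., d-1}`. -/
noncomputable def relWt {n d : ℕ} (q : Fin n → Fin d) : ℝ :=
  ((Finset.univ.filter fun ℓ => (q ℓ : ℕ) ≠ 0).card : ℝ) / n

/-!
Weight each letter by `1 - x` if it is `0` and by `x / (d - 1)` otherwise; the product weights
on strings of length `n` sum to `1`. Since `x / (d - 1) ≤ 1 - x`, every string of Hamming weight
at most `n x` has product weight at least `(1 - x) ^ (n (1 - x)) * (x / (d - 1)) ^ (n x)`, which is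
exactly `d ^ (-n h_d(x))`.
-/

open Finset Real

section HammingBall

variable {ι β : Type*} [Fintype ι] [DecidableEq β] [Zero β]

theorem prod_ite_eq_zero_eq_pow_hammingNorm {M : Type*} [CommMonoid M] (g : ι → β) (a b : M) :
    ∏ i, (if g i = 0 then b else a) =
      b ^ (Fintype.card ι - hammingNorm g) * a ^ hammingNorm g := by
  have hzeros : #{i | g i = 0} = Fintype.card ι - hammingNorm g :=
    Nat.eq_sub_of_add_eq <| by
      simpa [hammingNorm] using card_filter_add_card_filter_not (s := univ) (fun i => g i = 0)
  rw [prod_ite, prod_const, prod_const, hzeros]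
  rfl

theorem sum_ite_eq_zero_eq_add_card_mul [Fintype β] {R : Type*} [CommRing R] (a b : R) :
    ∑ c : β, (if c = 0 then b else a) = b + (Fintype.card β - 1) * a := by
  rw [Fintype.sum_eq_add_sum_compl 0, if_pos rfl,
    sum_congr rfl fun c hc => if_neg (by simpa using hc)]
  simp [card_compl, Nat.cast_sub Fintype.card_pos]

theorem rpow_sub_mul_rpow_le {a b : ℝ} (ha : 0 < a) (hab : a ≤ b) (N : ℝ) {w m : ℝ}
    (hwm : w ≤ m) :
    b ^ (N - m) * a ^ m ≤ b ^ (N - w) * a ^ w := by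
  have hb : 0 < b := ha.trans_le hab
  calc b ^ (N - m) * a ^ m = b ^ (N - m) * a ^ (m - w) * a ^ w := by
        rw [mul_assoc, ← rpow_add ha, sub_add_cancel]
    _ ≤ b ^ (N - m) * b ^ (m - w) * a ^ w := by gcongr
    _ = b ^ (N - w) * a ^ w := by rw [← rpow_add hb, sub_add_sub_cancel]

theorem card_hammingNorm_le_mul_le_one [DecidableEq ι] [Fintype β] {a b : ℝ} (ha : 0 < a)
    (hab : a ≤ b) (hsum : b + (Fintype.card β - 1) * a = 1) (m : ℝ) :
    (#{g : ι → β | (hammingNorm g : ℝ) ≤ m} : ℝ) *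
      (b ^ (Fintype.card ι - m) * a ^ m) ≤ 1 := by
  have hp : ∀ g : ι → β, 0 ≤ ∏ i, if g i = 0 then b else a := fun g =>
    prod_nonneg fun i _ => by split_ifs <;> linarith
  have hp_sum : ∑ g : ι → β, ∏ i, (if g i = 0 then b else a) = 1 := by
    rw [← Fintype.prod_sum (fun (_ : ι) (c : β) => if c = 0 then b else a)]
    simp [sum_ite_eq_zero_eq_add_card_mul, hsum]
  calc _ ≤ ∑ g ∈ {g : ι → β | (hammingNorm g : ℝ) ≤ m},
          ∏ i, (if g i = 0 then b else a) := by
        rw [← nsmul_eq_mul]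
        refine card_nsmul_le_sum _ _ _ fun g hg => ?_
        rw [prod_ite_eq_zero_eq_pow_hammingNorm, ← rpow_natCast, ← rpow_natCast,
          Nat.cast_sub hammingNorm_le_card_fintype]
        exact rpow_sub_mul_rpow_le ha hab _ (mem_filter.1 hg).2
    _ ≤ ∑ g : ι → β, ∏ i, (if g i = 0 then b else a) := sum_le_univ_sum_of_nonneg hp
    _ = 1 := hp_sum

end HammingBall

theorem relWt_eq_hammingNorm_div {n d : ℕ} [NeZero d] (q : Fin n → Fin d) :
    relWt q = hammingNorm q / n := by
  simp [relWt, hammingNorm, Fin.val_eq_zero_iff]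

theorem hammingNorm_le_of_relWt_le {n d : ℕ} [NeZero d] {q : Fin n → Fin d} {x : ℝ}
    (hq : relWt q ≤ x) : (hammingNorm q : ℝ) ≤ n * x := by
  rcases n.eq_zero_or_pos with rfl | hn
  · simp [hammingNorm_eq_zero, Subsingleton.elim q 0]
  · rwa [relWt_eq_hammingNorm_div, div_le_iff₀ (by exact_mod_cast hn), mul_comm] at hq

theorem rpow_mul_rpow_eq_rpow_neg_hEnt {d : ℕ} (hd : 1 < d) {x : ℝ} (hx0 : 0 < x) (hx1 : x < 1)
    (N : ℝ) :
    (1 - x) ^ (N - N * x) * (x / (d - 1)) ^ (N * x) = (d : ℝ) ^ (-(N * hEnt d x)) := by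
  have hd0 : (0 : ℝ) < d := by positivity
  have hd1 : (d : ℝ) ≠ 1 := by exact_mod_cast hd.ne'
  have hd_sub : (0 : ℝ) < d - 1 := by rw [sub_pos]; exact_mod_cast hd
  calc (1 - x) ^ (N - N * x) * (x / (d - 1)) ^ (N * x)
      = ((d : ℝ) ^ logb d (1 - x)) ^ (N - N * x) *
          ((d : ℝ) ^ logb d (x / (d - 1))) ^ (N * x) := by
        rw [rpow_logb hd0 hd1 (by linarith), rpow_logb hd0 hd1 (by positivity)]
    _ = (d : ℝ) ^ (logb d (1 - x) * (N - N * x) + logb d (x / (d - 1)) * (N * x)) := by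
        rw [rpow_add hd0, rpow_mul hd0.le, rpow_mul hd0.le]
    _ = (d : ℝ) ^ (-(N * hEnt d x)) := by
        rw [logb_div hx0.ne' hd_sub.ne', hEnt]
        ring_nf

theorem hamming_ball_bound (d n : ℕ) (hd : 2 ≤ d) (x : ℝ) (hx0 : 0 ≤ x)
    (hx1 : x ≤ 1 - 1 / d) :
    ((Finset.univ.filter fun i : Fin n → Fin d => relWt i ≤ x).card : ℝ) ≤
      (d : ℝ) ^ ((n : ℝ) * hEnt d x) := by
  have : NeZero d := ⟨by omega⟩
  have hd0 : (0 : ℝ) < d := by positivity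
  have hd_sub : (0 : ℝ) < d - 1 := by rw [sub_pos]; exact_mod_cast hd
  have hball : (univ.filter fun i : Fin n → Fin d => relWt i ≤ x) ⊆
      univ.filter fun i => (hammingNorm i : ℝ) ≤ n * x :=
    monotone_filter_right _ fun _ _ => hammingNorm_le_of_relWt_le
  rcases hx0.eq_or_lt with rfl | hx_pos
  · have hzero : ({i | (hammingNorm i : ℝ) ≤ n * 0} : Finset (Fin n → Fin d)) ⊆ {0} :=
      fun i hi => by simpa [hammingNorm_eq_zero] using hi
    simpa [hEnt] using card_le_card (hball.trans hzero)
  · have hx_lt : x < 1 := by linarith [one_div_pos.2 hd0]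
    have hab : x / (d - 1) ≤ 1 - x := by
      have hxd : x * d ≤ d - 1 := by
        calc x * d ≤ (1 - 1 / d) * d := by gcongr
          _ = d - 1 := by field_simp
      rw [div_le_iff₀ hd_sub]
      linarith
    have key := card_hammingNorm_le_mul_le_one (ι := Fin n) (β := Fin d)
      (div_pos hx_pos hd_sub) hab
      (by rw [Fintype.card_fin, mul_div_cancel₀ _ hd_sub.ne']; ring) (n * x)
    rw [Fintype.card_fin, rpow_mul_rpow_eq_rpow_neg_hEnt (by omega) hx_pos hx_lt,
      rpow_neg hd0.le, mul_inv_le_iff₀ (by positivity), one_mul] at key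
    exact (Nat.cast_le.2 (card_le_card hball)).trans key
end

section
/- Consider the sampling strategy that, given a string q ∈ {0,...,d-1}^(n+m) with m < n, picks a uniformly random subset t ⊆ {1,...,n+m} of size m and outputs w(q_t) as an estimate of w(q_{-t}). Then for every δ > 0 and every fixed q, the probability over t that |w(q_t) - w(q_{-t})| > δ is at most 2·exp(-δ²·m·(n+m)/(m+n+2)). -/
/-!
Let `A` be the support of `q` and `N = n + m`. Draw the complement `tᶜ`, a uniform `n`-subset, one
uniformly random point at a time. The proportion of `A` among the points not yet drawn is then a
martingale whose `j`-th step ranges over an interval of length `1 / (N - j)`, so Hoeffding's lemma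
at each step and a Chernoff bound give the Azuma–Hoeffding tail
`2 exp (-2 r² / ∑_{j=1}^{n} (N - j)⁻²)` for a deviation `r` after `n` draws. Since
`w(q_t) - w(q_{-t}) = -(N / n) · (that deviation)`, it remains to bound the variance proxy:
telescoping `a⁻² ≤ (m + 1) / m · (a⁻¹ - (a + 1)⁻¹)` for `a ≥ m` gives
`∑_{j=1}^{n} (N - j)⁻² ≤ (m + 1) n / (m² N)`. Expectations over random subsets are plain averages
over `k`-subsets, and the martingale step is a double count of pairs (`k`-subset, new point).
-/

open scoped Classical

/-- relative Hamming weight of the substring of `q` indexed by the finite set `s`. -/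
noncomputable def wOn {N d : ℕ} (q : Fin N → Fin d) (s : Finset (Fin N)) : ℝ :=
  ((s.filter fun ℓ => (q ℓ : ℕ) ≠ 0).card : ℝ) / s.card

open Finset Real MeasureTheory ProbabilityTheory

lemma two_point_mgf_le {p : ℝ} (hp0 : 0 ≤ p) (hp1 : p ≤ 1) {a b : ℝ} (hab : a ≤ b) (c : ℝ) :
    (1 - p) * exp (c * a) + p * exp (c * b) ≤
      exp (c * ((1 - p) * a + p * b) + c ^ 2 * (b - a) ^ 2 / 8) := by
  set μ : Measure ℝ := ENNReal.ofReal (1 - p) • .dirac a + ENNReal.ofReal p • .dirac b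
  have hμ (f : ℝ → ℝ) : ∫ x, f x ∂μ = (1 - p) * f a + p * f b := by
    rw [integral_add_measure, integral_smul_measure, integral_smul_measure, integral_dirac,
      integral_dirac, ENNReal.toReal_ofReal (by linarith), ENNReal.toReal_ofReal hp0]
    · rfl
    all_goals exact (integrable_dirac (by simp)).smul_measure ENNReal.ofReal_ne_top
  have : IsProbabilityMeasure μ := ⟨by
    simp [μ, ← ENNReal.ofReal_add (by linarith : 0 ≤ 1 - p) hp0]⟩
  have hsupp : ∀ᵐ x ∂μ, x ∈ Set.Icc a b := by
    simp only [μ, ae_add_measure_iff]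
    exact ⟨Measure.ae_smul_measure (by simp [hab]) _, Measure.ae_smul_measure (by simp [hab]) _⟩
  have hoeffding := (hasSubgaussianMGF_of_mem_Icc measurable_id.aemeasurable hsupp).mgf_le c
  simp only [mgf, hμ, id] at hoeffding
  set mean := (1 - p) * a + p * b
  have hcenter : (1 - p) * exp (c * a) + p * exp (c * b) =
      ((1 - p) * exp (c * (a - mean)) + p * exp (c * (b - mean))) * exp (c * mean) := by
    simp only [mul_sub, exp_sub]; field_simp
  rw [hcenter, add_comm (c * mean), exp_add]
  gcongr
  refine hoeffding.trans_eq (congrArg exp ?_)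
  push_cast [coe_nnnorm, Real.norm_eq_abs, div_pow, sq_abs]
  ring

section UrnDeviation

variable {α : Type*} [Fintype α] [DecidableEq α]

local notation "N" => Fintype.card α

lemma sum_compl_insert_inter {M : Type*} [AddCommMonoid M] (A s : Finset α) (g : ℕ → M) :
    ∑ i ∈ sᶜ, g #(insert i s ∩ A) = #(sᶜ ∩ A) • g (#(s ∩ A) + 1) + #(sᶜ \ A) • g #(s ∩ A) := by
  rw [← sum_inter_add_sum_sdiff sᶜ A, ← sum_const, ← sum_const]
  congr 1 <;> refine sum_congr rfl fun i hi ↦ ?_ <;> simp at hi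
  · rw [insert_inter_of_mem hi.2, card_insert_of_notMem (by simp [hi.1])]
  · rw [insert_inter_of_notMem hi.2]

lemma card_inter_add_card_compl_inter (A s : Finset α) : #(s ∩ A) + #(sᶜ ∩ A) = #A := by
  rw [← card_union_of_disjoint (disjoint_compl_right.mono inter_subset_left inter_subset_left),
    ← union_inter_distrib_right, union_compl, univ_inter]

/-- For `#t = k` this is `#A / N` minus the proportion of `A` among the `N - k` points outside
`t`: adding a uniformly random outside point to `t` leaves its mean unchanged (the urn
martingale) and moves it within an interval of length `1 / (N - k - 1)`. -/
noncomputable def urnDeviation (A : Finset α) (k : ℕ) (t : Finset α) : ℝ :=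
  (#(t ∩ A) - k * #A / N) / (N - k)

lemma sum_exp_urnDeviation_insert_le (A : Finset α) {k : ℕ} (hk : k + 1 < N) (c : ℝ)
    {s : Finset α} (hs : #s = k) :
    ∑ i ∈ sᶜ, exp (c * urnDeviation A (k + 1) (insert i s)) ≤
      (N - k) * exp (c * urnDeviation A k s + c ^ 2 / (8 * (N - (k + 1)) ^ 2)) := by
  set x := #(s ∩ A) with hx
  set y := #(sᶜ ∩ A)
  have hxy : (x + y : ℝ) = #A := mod_cast card_inter_add_card_compl_inter A s
  have hrest : (#(sᶜ \ A) : ℝ) = N - k - y := by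
    rw [eq_sub_iff_add_eq, add_comm, ← hs, ← Nat.cast_sub (card_le_univ s), ← card_compl]
    exact mod_cast card_inter_add_card_sdiff sᶜ A
  have hNk : (0 : ℝ) < N - (k + 1) := by rw [sub_pos]; exact_mod_cast hk
  set z : ℕ → ℝ := fun j ↦ (j - (k + 1) * #A / N) / (N - (k + 1))
  have hz (i : α) : urnDeviation A (k + 1) (insert i s) = z #(insert i s ∩ A) := by
    simp [z, urnDeviation]
  simp_rw [hz, sum_compl_insert_inter A s (fun j ↦ exp (c * z j)), nsmul_eq_mul, hrest]
  have hNk' : (0 : ℝ) < N - k := by linarith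
  have hy : (y : ℝ) ≤ N - k := by linarith [(#(sᶜ \ A)).cast_nonneg (α := ℝ)]
  set p := (y : ℝ) / (N - k)
  have hmartingale : (1 - p) * z x + p * z (x + 1) = urnDeviation A k s := by
    have hN : (0 : ℝ) < N := by linarith
    simp only [z, p, urnDeviation, ← hx, ← hxy]
    push_cast
    field_simp
    ring
  have hgap : z (x + 1) - z x = 1 / (N - (k + 1)) := by
    simp only [z]; push_cast; ring
  calc y * exp (c * z (x + 1)) + (N - k - y) * exp (c * z x)
      = (N - k) * ((1 - p) * exp (c * z x) + p * exp (c * z (x + 1))) := by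
        simp only [p]; field_simp; ring
    _ ≤ (N - k) *
          exp (c * ((1 - p) * z x + p * z (x + 1)) + c ^ 2 * (z (x + 1) - z x) ^ 2 / 8) := by
        gcongr
        exact two_point_mgf_le (by positivity) ((div_le_one hNk').mpr hy)
          (by rw [← sub_nonneg, hgap]; positivity) c
    _ = _ := by rw [hmartingale, hgap]; field_simp

lemma sum_powersetCard_succ_nsmul {M : Type*} [AddCommMonoid M] (k : ℕ) (f : Finset α → M) :
    (k + 1) • ∑ t ∈ powersetCard (k + 1) univ, f t =
      ∑ s ∈ powersetCard k univ, ∑ i ∈ sᶜ, f (insert i s) := by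
  have hcard (t) (ht : t ∈ powersetCard (k + 1) (univ : Finset α)) :
      (k + 1) • f t = ∑ _i ∈ t, f t := by
    rw [sum_const, (mem_powersetCard.mp ht).2]
  rw [smul_sum, sum_congr rfl hcard, sum_sigma', sum_sigma']
  refine sum_nbij' (fun p ↦ ⟨p.1.erase p.2, p.2⟩) (fun p ↦ ⟨insert p.2 p.1, p.2⟩) ?_ ?_ ?_ ?_ ?_ <;>
    rintro ⟨t, i⟩ <;> simp +contextual [card_erase_of_mem, card_insert_of_notMem]

lemma sum_exp_urnDeviation_le (A : Finset α) {k : ℕ} (hk : k < N) (c : ℝ) :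
    ∑ t ∈ powersetCard k univ, exp (c * urnDeviation A k t) ≤
      (N).choose k * exp (c ^ 2 / 8 * ∑ j ∈ Icc 1 k, 1 / ((N : ℝ) - j) ^ 2) := by
  induction k with
  | zero => simp [urnDeviation]
  | succ k ih =>
    have hk' : k < N := by omega
    set step : ℝ := c ^ 2 / (8 * (N - (k + 1)) ^ 2)
    have hchoose : ((N : ℝ) - k) * (N).choose k = (k + 1) * (N).choose (k + 1) := by
      rw [← Nat.cast_sub hk'.le]
      exact_mod_cast by rw [mul_comm, ← Nat.choose_succ_right_eq, mul_comm]
    have hdouble := sum_powersetCard_succ_nsmul k (fun t ↦ exp (c * urnDeviation A (k + 1) t))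
    rw [nsmul_eq_mul] at hdouble
    refine le_of_mul_le_mul_left ?_ (by positivity : (0 : ℝ) < k + 1)
    calc ((k : ℝ) + 1) * ∑ t ∈ powersetCard (k + 1) univ, exp (c * urnDeviation A (k + 1) t)
        = ∑ s ∈ powersetCard k univ, ∑ i ∈ sᶜ,
            exp (c * urnDeviation A (k + 1) (insert i s)) := by exact_mod_cast hdouble
      _ ≤ ∑ s ∈ powersetCard k univ, (N - k) * exp (c * urnDeviation A k s + step) :=
          sum_le_sum fun s hs ↦ sum_exp_urnDeviation_insert_le A hk c (mem_powersetCard.mp hs).2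
      _ = (N - k) * exp step * ∑ s ∈ powersetCard k univ, exp (c * urnDeviation A k s) := by
          rw [mul_sum]; congr! 1 with s; rw [exp_add]; ring
      _ ≤ (N - k) * exp step *
            ((N).choose k * exp (c ^ 2 / 8 * ∑ j ∈ Icc 1 k, 1 / ((N : ℝ) - j) ^ 2)) := by
          have hkN : (k : ℝ) < N := mod_cast hk'
          gcongr
          exact ih hk'
      _ = (k + 1) * ((N).choose (k + 1) *
            exp (c ^ 2 / 8 * ∑ j ∈ Icc 1 (k + 1), 1 / ((N : ℝ) - j) ^ 2)) := by
          have hstep : c ^ 2 / 8 * (1 / ((N : ℝ) - ↑(k + 1)) ^ 2) = step := by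
            simp only [step]; push_cast; field_simp
          rw [sum_Icc_succ_top (by omega), mul_add, exp_add, hstep]
          linear_combination
            (exp step * exp (c ^ 2 / 8 * ∑ j ∈ Icc 1 k, 1 / ((N : ℝ) - j) ^ 2)) * hchoose

lemma card_le_mul_urnDeviation_mul_exp_le (A : Finset α) {k : ℕ} (hk : k < N) (c r : ℝ) :
    #{t ∈ powersetCard k univ | r ≤ c * urnDeviation A k t} * exp r ≤
      (N).choose k * exp (c ^ 2 / 8 * ∑ j ∈ Icc 1 k, 1 / ((N : ℝ) - j) ^ 2) :=
  calc #{t ∈ powersetCard k univ | r ≤ c * urnDeviation A k t} * exp r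
      = ∑ _t ∈ powersetCard k univ with r ≤ c * urnDeviation A k _t, exp r := by
        rw [sum_const, nsmul_eq_mul]
    _ ≤ ∑ t ∈ powersetCard k univ with r ≤ c * urnDeviation A k t,
          exp (c * urnDeviation A k t) :=
        sum_le_sum fun t ht ↦ exp_le_exp.mpr (mem_filter.mp ht).2
    _ ≤ ∑ t ∈ powersetCard k univ, exp (c * urnDeviation A k t) :=
        sum_le_sum_of_subset_of_nonneg (filter_subset _ _) fun _ _ _ ↦ (exp_pos _).le
    _ ≤ _ := sum_exp_urnDeviation_le A hk c

lemma card_lt_abs_urnDeviation_le (A : Finset α) {k : ℕ} (hk0 : 0 < k) (hk : k < N) {r V : ℝ}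
    (hr : 0 < r) (hV : ∑ j ∈ Icc 1 k, 1 / ((N : ℝ) - j) ^ 2 ≤ V) :
    #{t ∈ powersetCard k univ | r < |urnDeviation A k t|} ≤
      2 * (N).choose k * exp (-2 * r ^ 2 / V) := by
  have hV0 : 0 < V := by
    refine (sum_pos (fun j hj ↦ ?_) ⟨1, mem_Icc.mpr ⟨le_rfl, hk0⟩⟩).trans_le hV
    have : (j : ℝ) < N := mod_cast (mem_Icc.mp hj).2.trans_lt hk
    have : (0 : ℝ) < N - j := by linarith
    positivity
  set c := 4 * r / V
  -- the Chernoff parameter `c` optimises `c ^ 2 V / 8 - c r`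
  have one_sided (c' : ℝ) (hc' : c' ^ 2 = c ^ 2) :
      #{t ∈ powersetCard k univ | 4 * r ^ 2 / V ≤ c' * urnDeviation A k t} ≤
        (N).choose k * exp (-2 * r ^ 2 / V) := by
    have h := (card_le_mul_urnDeviation_mul_exp_le A hk c' (4 * r ^ 2 / V)).trans
      (by gcongr : _ ≤ (N).choose k * exp (c' ^ 2 / 8 * V))
    have hexp : c' ^ 2 / 8 * V = -2 * r ^ 2 / V + 4 * r ^ 2 / V := by
      rw [hc']; simp only [c]; field_simp; ring
    rw [hexp, exp_add, ← mul_assoc] at h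
    exact le_of_mul_le_mul_right h (exp_pos _)
  have hsplit : {t ∈ powersetCard k (univ : Finset α) | r < |urnDeviation A k t|} ⊆
      {t ∈ powersetCard k (univ : Finset α) | 4 * r ^ 2 / V ≤ c * urnDeviation A k t} ∪
        {t ∈ powersetCard k (univ : Finset α) | 4 * r ^ 2 / V ≤ -c * urnDeviation A k t} := by
    intro t ht
    simp only [mem_union, mem_filter] at ht ⊢
    have hcr : 4 * r ^ 2 / V = c * r := by ring
    have hc : 0 ≤ c := by positivity
    rcases lt_abs.mp ht.2 with h | h
    · exact .inl ⟨ht.1, by rw [hcr]; gcongr⟩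
    · exact .inr ⟨ht.1, by rw [hcr, neg_mul, ← mul_neg]; gcongr⟩
  calc (#{t ∈ powersetCard k univ | r < |urnDeviation A k t|} : ℝ)
      ≤ #{t ∈ powersetCard k univ | 4 * r ^ 2 / V ≤ c * urnDeviation A k t} +
          #{t ∈ powersetCard k univ | 4 * r ^ 2 / V ≤ -c * urnDeviation A k t} :=
        mod_cast (card_le_card hsplit).trans (card_union_le _ _)
    _ ≤ _ := by linarith [one_sided c rfl, one_sided (-c) (neg_sq c)]

lemma card_inter_div_sub_card_compl_inter_div (A t : Finset α) (ht : t.Nonempty)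
    (htc : tᶜ.Nonempty) :
    (#(t ∩ A) / #t - #(tᶜ ∩ A) / #tᶜ : ℝ) = -(N / #tᶜ * urnDeviation A #tᶜ tᶜ) := by
  have hN : (N : ℝ) - #tᶜ = #t := by
    rw [card_compl, Nat.cast_sub (card_le_univ t)]; ring
  have hN0 : (0 : ℝ) < N := mod_cast ht.card_pos.trans_le (card_le_univ t)
  have hA : (#(t ∩ A) + #(tᶜ ∩ A) : ℝ) = #A := mod_cast card_inter_add_card_compl_inter A t
  have ht' : (0 : ℝ) < #t := mod_cast ht.card_pos
  have htc' : (0 : ℝ) < #tᶜ := mod_cast htc.card_pos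
  rw [urnDeviation, hN, ← hA]
  field_simp
  linear_combination (#(tᶜ ∩ A) : ℝ) * hN

end UrnDeviation

lemma one_div_sq_le_mul_sub {m a : ℝ} (hm : 0 < m) (ha : m ≤ a) :
    1 / a ^ 2 ≤ (m + 1) / m * (1 / a - 1 / (a + 1)) := by
  have ha0 : 0 < a := hm.trans_le ha
  rw [div_sub_div _ _ ha0.ne' (by positivity), div_mul_div_comm, div_le_div_iff₀ (by positivity)
    (by positivity)]
  nlinarith

lemma sum_Icc_one_div_sub_sq_le {m N : ℕ} (hm : 0 < m) {k : ℕ} (hkN : k + m ≤ N) :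
    ∑ j ∈ Icc 1 k, 1 / ((N : ℝ) - j) ^ 2 ≤ ((m : ℝ) + 1) / m * (1 / (N - k) - 1 / N) := by
  induction k with
  | zero => simp
  | succ k ih =>
    have ha : (m : ℝ) ≤ N - (k + 1) := by
      rw [le_sub_iff_add_le']; exact_mod_cast (by omega : k + 1 + m ≤ N)
    rw [sum_Icc_succ_top (by omega)]
    push_cast
    calc _ ≤ ((m : ℝ) + 1) / m * (1 / (N - k) - 1 / N) +
          (m + 1) / m * (1 / (N - (k + 1)) - 1 / (N - (k + 1) + 1)) := by
          gcongr
          · exact ih (by omega)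
          · exact one_div_sq_le_mul_sub (by exact_mod_cast hm) ha
      _ = _ := by ring_nf

lemma sampling_exponent_le {δ m n : ℝ} (hm : 1 ≤ m) (hmn : m + 1 ≤ n) :
    -2 * (δ * n / (n + m)) ^ 2 / ((m + 1) / m * (1 / m - 1 / (n + m))) ≤
      -δ ^ 2 * m * (n + m) / (m + n + 2) := by
  have hn : 0 < n := by linarith
  have hB : (m + 1) / m * (1 / m - 1 / (n + m)) = (m + 1) * n / (m ^ 2 * (n + m)) := by
    have : m ≠ 0 := by positivity
    field_simp
    ring
  have hpoly : (n + m) ^ 2 * (m + 1) ≤ 2 * n * m * (m + n + 2) := by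
    nlinarith [mul_nonneg (sub_nonneg.mpr hm) (sub_nonneg.mpr hmn)]
  rw [hB]
  calc -2 * (δ * n / (n + m)) ^ 2 / ((m + 1) * n / (m ^ 2 * (n + m)))
      = -(2 * δ ^ 2 * m * (n * m) / ((n + m) * (m + 1))) := by
        field_simp
    _ ≤ -δ ^ 2 * m * (n + m) / (m + n + 2) := by
        rw [neg_mul, neg_mul, neg_div, neg_le_neg_iff, div_le_div_iff₀ (by positivity)
          (by positivity)]
        have : 0 ≤ δ ^ 2 * m := by positivity
        nlinarith [mul_le_mul_of_nonneg_left hpoly this]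

lemma card_sampling_error_eq {d m n : ℕ} (hm : 0 < m) (hn : 0 < n) (q : Fin (n + m) → Fin d)
    (δ : ℝ) :
    #{t ∈ powersetCard m univ | δ < |wOn q t - wOn q tᶜ|} =
      #{s ∈ powersetCard n univ | δ * n / (n + m) < |urnDeviation {ℓ | (q ℓ : ℕ) ≠ 0} n s|} := by
  set A : Finset (Fin (n + m)) := {ℓ | (q ℓ : ℕ) ≠ 0}
  have hcompl {t : Finset (Fin (n + m))} : #tᶜ = n ↔ #t = m := by
    rw [card_compl, Fintype.card_fin]; omega
  have hn' : (0 : ℝ) < n := mod_cast hn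
  have herror {t : Finset (Fin (n + m))} (ht : #t = m) :
      δ < |wOn q t - wOn q tᶜ| ↔ δ * n / (n + m) < |urnDeviation A n tᶜ| := by
    have hw (s : Finset (Fin (n + m))) : wOn q s = #(s ∩ A) / #s := by
      rw [wOn]; congr 3; ext; simp [A]
    rw [hw, hw, card_inter_div_sub_card_compl_inter_div A t (card_pos.mp (by omega))
      (card_pos.mp (by rw [hcompl.mpr ht]; omega)), hcompl.mpr ht, Fintype.card_fin, abs_neg,
      abs_mul, abs_of_pos (by positivity), div_mul_eq_mul_div, lt_div_iff₀ hn', Nat.cast_add,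
      div_lt_iff₀ (by positivity), mul_comm δ, mul_comm |_|]
  refine card_nbij' compl compl (fun t ht ↦ ?_) (fun s hs ↦ ?_) (fun _ _ ↦ compl_compl _)
    (fun _ _ ↦ compl_compl _)
  · simp only [coe_filter, mem_powersetCard, subset_univ, true_and, Set.mem_ofPred_eq] at ht ⊢
    exact ⟨hcompl.mpr ht.1, (herror ht.1).mp ht.2⟩
  · simp only [coe_filter, mem_powersetCard, subset_univ, true_and, Set.mem_ofPred_eq] at hs ⊢
    have hsc : #sᶜ = m := hcompl.mp (by rw [compl_compl]; exact hs.1)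
    exact ⟨hsc, (herror hsc).mpr (by rw [compl_compl]; exact hs.2)⟩

/-- Hoeffding-type bound on the error probability of the sampling strategy `Φ(d,m,n)`:
for a fixed string `q` of length `n+m`, the fraction of `m`-subsets `t` on which the
estimate `w(q_t)` is more than `δ` away from `w(q_{-t})` is at most
`2 exp(-δ² m (n+m) / (m+n+2))`. -/
theorem sampling_error_bound (d m n : ℕ) (hm : 0 < m) (hmn : m < n) (δ : ℝ) (hδ : 0 < δ)
    (q : Fin (n + m) → Fin d) :
    (((Finset.univ.powersetCard m).filter fun t : Finset (Fin (n + m)) =>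
        δ < |wOn q t - wOn q tᶜ|).card : ℝ) / ((n + m).choose m) ≤
      2 * Real.exp (-δ ^ 2 * m * (n + m) / (m + n + 2)) := by
  have hV := sum_Icc_one_div_sub_sq_le hm (N := n + m) (k := n) le_rfl
  simp only [Nat.cast_add, add_sub_cancel_left] at hV
  have htail := card_lt_abs_urnDeviation_le {ℓ | (q ℓ : ℕ) ≠ 0} (k := n) (by omega)
    (by simp; omega) (r := δ * n / (n + m))
    (div_pos (mul_pos hδ (mod_cast hm.trans hmn)) (by positivity))
    (by simpa only [Fintype.card_fin, Nat.cast_add] using hV)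
  rw [div_le_iff₀ (mod_cast Nat.choose_pos (by omega)), card_sampling_error_eq hm (by omega)]
  calc _ ≤ _ := htail
    _ ≤ 2 * (n + m).choose n * exp (-δ ^ 2 * m * (n + m) / (m + n + 2)) := by
      simp only [Fintype.card_fin]
      gcongr 2 * _ * exp ?_
      exact sampling_exponent_le (n := n) (Nat.one_le_cast.mpr hm) (by exact_mod_cast hmn)
    _ = _ := by rw [Nat.choose_symm_add]; ring
end
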